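/- arXiv:2512.01327 — 2 statements merged into one kernel-verified Lean document; each statement's English description precedes it below -/
import Mathlib

section
/- Let φ₁, φ₂, θ ∈ [−π, π] with φ₁ ≠ 0, φ₂ ≠ 0, |θ| ≠ |φ₊|, |θ| ≠ |φ₋|, S₋ ≠ 0, and suppose |θ| < φ_l or |θ| > φ_u (case (i)). Define χ = 4·arctan((m₊ − m₋)/(m₊ + m₋)). Then cosh((r₊ + r₋)/2) = | tan(χ/2)·( cos(φ₂/2) − cos(θ)·cos(φ₁/2) ) / (2·S₋) | and cosh((r₊ − r₋)/2) = | tan(χ/2)·( cos(φ₁/2) − cos(θ)·cos(φ₂/2) ) / (2·S₋) |. -/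
/-- `S₊ = (sin²(φ₊/2) + sin²(φ₋/2))/2` where `φ₊ = (φ₁+φ₂)/2`, `φ₋ = (φ₁−φ₂)/2`. -/
noncomputable def Sp (φ₁ φ₂ : ℝ) : ℝ :=
  (Real.sin ((φ₁ + φ₂) / 4) ^ 2 + Real.sin ((φ₁ - φ₂) / 4) ^ 2) / 2

/-- `S₋ = (sin²(φ₊/2) − sin²(φ₋/2))/2`. -/
noncomputable def Sm (φ₁ φ₂ : ℝ) : ℝ :=
  (Real.sin ((φ₁ + φ₂) / 4) ^ 2 - Real.sin ((φ₁ - φ₂) / 4) ^ 2) / 2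

/-- `φ_u = max(|φ₊|, |φ₋|)`. -/
noncomputable def phiu (φ₁ φ₂ : ℝ) : ℝ := max |(φ₁ + φ₂) / 2| |(φ₁ - φ₂) / 2|

/-- `φ_l = min(|φ₊|, |φ₋|)`. -/
noncomputable def phil (φ₁ φ₂ : ℝ) : ℝ := min |(φ₁ + φ₂) / 2| |(φ₁ - φ₂) / 2|

/-- `m₊ = √|sin²(φ₊/2) − sin²(θ/2)|`. -/
noncomputable def mplus (φ₁ φ₂ θ : ℝ) : ℝ :=
  Real.sqrt |Real.sin ((φ₁ + φ₂) / 4) ^ 2 - Real.sin (θ / 2) ^ 2|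

/-- `m₋ = √|sin²(φ₋/2) − sin²(θ/2)|`. -/
noncomputable def mminus (φ₁ φ₂ θ : ℝ) : ℝ :=
  Real.sqrt |Real.sin ((φ₁ - φ₂) / 4) ^ 2 - Real.sin (θ / 2) ^ 2|

/-- The weight `χ = 4·arctan((m₊ − m₋)/(m₊ + m₋))`. -/
noncomputable def chi (φ₁ φ₂ θ : ℝ) : ℝ :=
  4 * Real.arctan ((mplus φ₁ φ₂ θ - mminus φ₁ φ₂ θ) / (mplus φ₁ φ₂ θ + mminus φ₁ φ₂ θ))

/-- `r₊ = log|sin((φ₊+θ)/2)/sin((φ₊−θ)/2)|`. -/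
noncomputable def rplus (φ₁ φ₂ θ : ℝ) : ℝ :=
  Real.log |Real.sin (((φ₁ + φ₂) / 2 + θ) / 2) / Real.sin (((φ₁ + φ₂) / 2 - θ) / 2)|

/-- `r₋ = log|sin((φ₋+θ)/2)/sin((φ₋−θ)/2)|`. -/
noncomputable def rminus (φ₁ φ₂ θ : ℝ) : ℝ :=
  Real.log |Real.sin (((φ₁ - φ₂) / 2 + θ) / 2) / Real.sin (((φ₁ - φ₂) / 2 - θ) / 2)|

/-- `C₊ = (cos²(φ₊/2) + cos²(φ₋/2))/2`. -/
noncomputable def Cp (φ₁ φ₂ : ℝ) : ℝ :=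
  (Real.cos ((φ₁ + φ₂) / 4) ^ 2 + Real.cos ((φ₁ - φ₂) / 4) ^ 2) / 2

/-- `C₋ = (cos²(φ₊/2) − cos²(φ₋/2))/2`. -/
noncomputable def Cm (φ₁ φ₂ : ℝ) : ℝ :=
  (Real.cos ((φ₁ + φ₂) / 4) ^ 2 - Real.cos ((φ₁ - φ₂) / 4) ^ 2) / 2
lemma sin_mul_sin' (x y : ℝ) :
    Real.sin (x + y) * Real.sin (x - y) = Real.sin x ^ 2 - Real.sin y ^ 2 := by
  rw [Real.sin_add, Real.sin_sub]
  linear_combination Real.sin x ^ 2 * Real.sin_sq_add_cos_sq y -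
    Real.sin y ^ 2 * Real.sin_sq_add_cos_sq x

lemma abs_add_of_mul_pos {x y : ℝ} (h : 0 < x * y) : |x| + |y| = |x + y| := by
  rcases mul_pos_iff.mp h with ⟨hx, hy⟩ | ⟨hx, hy⟩
  · rw [abs_of_pos hx, abs_of_pos hy, abs_of_pos (by linarith)]
  · rw [abs_of_neg hx, abs_of_neg hy, abs_of_neg (by linarith)]; ring

lemma core (p q u v : ℝ) (hp : p ≠ 0) (hq : q ≠ 0) (hu : u ≠ 0) (hv : v ≠ 0)
    (hsign : 0 < (p * u) * (q * v)) :
    Real.cosh ((Real.log |p / q| + Real.log |u / v|) / 2)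
      = |p * u + q * v| / (2 * (Real.sqrt |p * q| * Real.sqrt |u * v|)) := by
  have hPU : (0:ℝ) < |p * u| := abs_pos.mpr (by rcases mul_pos_iff.mp hsign with ⟨h,_⟩|⟨h,_⟩ <;> nlinarith)
  have hQV : (0:ℝ) < |q * v| := abs_pos.mpr (by rcases mul_pos_iff.mp hsign with ⟨_,h⟩|⟨_,h⟩ <;> nlinarith)
  have hlog : (Real.log |p / q| + Real.log |u / v|) / 2
      = Real.log (Real.sqrt (|p * u| / |q * v|)) := by
    rw [Real.log_sqrt (by positivity), Real.log_div (ne_of_gt hPU) (ne_of_gt hQV),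
      abs_mul, abs_mul, Real.log_mul (abs_ne_zero.mpr hp) (abs_ne_zero.mpr hu),
      Real.log_mul (abs_ne_zero.mpr hq) (abs_ne_zero.mpr hv),
      abs_div, abs_div, Real.log_div (abs_ne_zero.mpr hp) (abs_ne_zero.mpr hq),
      Real.log_div (abs_ne_zero.mpr hu) (abs_ne_zero.mpr hv)]
    ring
  rw [hlog, Real.cosh_log (Real.sqrt_pos.mpr (by positivity))]
  have h1 : Real.sqrt (|p * u| / |q * v|) = Real.sqrt |p * u| / Real.sqrt |q * v| :=
    Real.sqrt_div (le_of_lt hPU) _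
  have hsP : Real.sqrt |p * u| > 0 := Real.sqrt_pos.mpr hPU
  have hsQ : Real.sqrt |q * v| > 0 := Real.sqrt_pos.mpr hQV
  have h2 : Real.sqrt |p * q| * Real.sqrt |u * v| = Real.sqrt |p * u| * Real.sqrt |q * v| := by
    rw [← Real.sqrt_mul (abs_nonneg _), ← Real.sqrt_mul (abs_nonneg _), ← abs_mul, ← abs_mul]
    ring_nf
  have h3 : |p * u| + |q * v| = |p * u + q * v| := abs_add_of_mul_pos hsign
  rw [h1, h2, ← h3]
  have e1 : Real.sqrt |p * u| ^ 2 = |p * u| := Real.sq_sqrt (abs_nonneg _)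
  have e2 : Real.sqrt |q * v| ^ 2 = |q * v| := Real.sq_sqrt (abs_nonneg _)
  rw [inv_div]
  field_simp
  rw [e1, e2]

lemma tan_chi (sA sB : ℝ) (hA : sA ≠ 0) (hB : sB ≠ 0) :
    Real.tan (2 * Real.arctan ((Real.sqrt |sA| - Real.sqrt |sB|) /
        (Real.sqrt |sA| + Real.sqrt |sB|)))
      = (|sA| - |sB|) / (2 * (Real.sqrt |sA| * Real.sqrt |sB|)) := by
  have hP : 0 < Real.sqrt |sA| := Real.sqrt_pos.mpr (abs_pos.mpr hA)
  have hQ : 0 < Real.sqrt |sB| := Real.sqrt_pos.mpr (abs_pos.mpr hB)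
  have e1 : Real.sqrt |sA| ^ 2 = |sA| := Real.sq_sqrt (abs_nonneg _)
  have e2 : Real.sqrt |sB| ^ 2 = |sB| := Real.sq_sqrt (abs_nonneg _)
  rw [Real.tan_two_mul, Real.tan_arctan]
  have hs : Real.sqrt |sA| + Real.sqrt |sB| ≠ 0 := by positivity
  have hden : 1 - ((Real.sqrt |sA| - Real.sqrt |sB|) / (Real.sqrt |sA| + Real.sqrt |sB|)) ^ 2
      = 4 * (Real.sqrt |sA| * Real.sqrt |sB|) / (Real.sqrt |sA| + Real.sqrt |sB|) ^ 2 := by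
    field_simp
    ring
  rw [hden, ← e1, ← e2]
  field_simp
  rw [Real.sqrt_sq hP.le, Real.sqrt_sq hQ.le]; ring

lemma master (a b t : ℝ)
    (hsign : 0 < (Real.sin a ^ 2 - Real.sin t ^ 2) * (Real.sin b ^ 2 - Real.sin t ^ 2))
    (hab : Real.sin a ^ 2 - Real.sin b ^ 2 ≠ 0) :
    (Real.cosh ((Real.log |Real.sin (a + t) / Real.sin (a - t)| +
        Real.log |Real.sin (b + t) / Real.sin (b - t)|) / 2)
      = |Real.tan (2 * Real.arctan ((Real.sqrt |Real.sin a ^ 2 - Real.sin t ^ 2| -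
            Real.sqrt |Real.sin b ^ 2 - Real.sin t ^ 2|) /
            (Real.sqrt |Real.sin a ^ 2 - Real.sin t ^ 2| +
             Real.sqrt |Real.sin b ^ 2 - Real.sin t ^ 2|))) *
          (Real.cos (a - b) - Real.cos (t + t) * Real.cos (a + b)) /
          (2 * ((Real.sin a ^ 2 - Real.sin b ^ 2) / 2))|) ∧
    (Real.cosh ((Real.log |Real.sin (a + t) / Real.sin (a - t)| -
        Real.log |Real.sin (b + t) / Real.sin (b - t)|) / 2)
      = |Real.tan (2 * Real.arctan ((Real.sqrt |Real.sin a ^ 2 - Real.sin t ^ 2| -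
            Real.sqrt |Real.sin b ^ 2 - Real.sin t ^ 2|) /
            (Real.sqrt |Real.sin a ^ 2 - Real.sin t ^ 2| +
             Real.sqrt |Real.sin b ^ 2 - Real.sin t ^ 2|))) *
          (Real.cos (a + b) - Real.cos (t + t) * Real.cos (a - b)) /
          (2 * ((Real.sin a ^ 2 - Real.sin b ^ 2) / 2))|) := by
  set sA := Real.sin a ^ 2 - Real.sin t ^ 2 with hsAdef
  set sB := Real.sin b ^ 2 - Real.sin t ^ 2 with hsBdef
  have hsA : sA ≠ 0 := by rcases mul_pos_iff.mp hsign with ⟨h1, _⟩ | ⟨h1, _⟩ <;> [exact ne_of_gt h1; exact ne_of_lt h1]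
  have hsB : sB ≠ 0 := by rcases mul_pos_iff.mp hsign with ⟨_, h2⟩ | ⟨_, h2⟩ <;> [exact ne_of_gt h2; exact ne_of_lt h2]
  have hpq : Real.sin (a + t) * Real.sin (a - t) = sA := sin_mul_sin' a t
  have huv : Real.sin (b + t) * Real.sin (b - t) = sB := sin_mul_sin' b t
  have hpqne : Real.sin (a + t) * Real.sin (a - t) ≠ 0 := by rw [hpq]; exact hsA
  have huvne : Real.sin (b + t) * Real.sin (b - t) ≠ 0 := by rw [huv]; exact hsB
  have hp : Real.sin (a + t) ≠ 0 := left_ne_zero_of_mul hpqne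
  have hq : Real.sin (a - t) ≠ 0 := right_ne_zero_of_mul hpqne
  have hu : Real.sin (b + t) ≠ 0 := left_ne_zero_of_mul huvne
  have hv : Real.sin (b - t) ≠ 0 := right_ne_zero_of_mul huvne
  -- the RHS reduction
  have h2S : Real.sin a ^ 2 - Real.sin b ^ 2 = sA - sB := by rw [hsAdef, hsBdef]; ring
  have hABne : sA - sB ≠ 0 := by rw [← h2S]; exact hab
  have habs : |(|sA| - |sB|)| = |sA - sB| := by
    rcases mul_pos_iff.mp hsign with ⟨h1, h2⟩ | ⟨h1, h2⟩
    · rw [abs_of_pos h1, abs_of_pos h2]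
    · rw [abs_of_neg h1, abs_of_neg h2, ← abs_neg]; ring_nf
  have hm : (0:ℝ) < 2 * (Real.sqrt |sA| * Real.sqrt |sB|) := by
    have := Real.sqrt_pos.mpr (abs_pos.mpr hsA)
    have := Real.sqrt_pos.mpr (abs_pos.mpr hsB)
    positivity
  have hRHS : ∀ N : ℝ,
      |Real.tan (2 * Real.arctan ((Real.sqrt |sA| - Real.sqrt |sB|) /
          (Real.sqrt |sA| + Real.sqrt |sB|))) * N /
        (2 * ((Real.sin a ^ 2 - Real.sin b ^ 2) / 2))|
      = |N| / (2 * (Real.sqrt |sA| * Real.sqrt |sB|)) := by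
    intro N
    rw [tan_chi _ _ hsA hsB, h2S, abs_div, abs_mul, abs_div, habs, abs_of_pos hm]
    have h1 : |2 * ((sA - sB) / 2)| = |sA - sB| := by congr 1; ring
    rw [h1]
    have hD := abs_ne_zero.mpr hABne
    field_simp
  constructor
  · have hsign' : 0 < (Real.sin (a + t) * Real.sin (b + t)) * (Real.sin (a - t) * Real.sin (b - t)) := by
      have : (Real.sin (a + t) * Real.sin (b + t)) * (Real.sin (a - t) * Real.sin (b - t)) = sA * sB := by
        rw [← hpq, ← huv]; ring
      rw [this]; exact hsign
    have hc := core _ _ _ _ hp hq hu hv hsign'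
    rw [hc, hpq, huv, hRHS]
    congr 2
    rw [Real.sin_add, Real.sin_sub, Real.sin_add, Real.sin_sub, Real.cos_sub, Real.cos_add, Real.cos_add]
    linear_combination (Real.cos a * Real.cos b + Real.sin a * Real.sin b) * Real.sin_sq_add_cos_sq t
  · have hflip : Real.log |Real.sin (b + t) / Real.sin (b - t)|
        = - Real.log |Real.sin (b - t) / Real.sin (b + t)| := by
      rw [← Real.log_inv]; congr 1; rw [← abs_inv, inv_div]
    have harg : (Real.log |Real.sin (a + t) / Real.sin (a - t)| -
        Real.log |Real.sin (b + t) / Real.sin (b - t)|) / 2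
        = (Real.log |Real.sin (a + t) / Real.sin (a - t)| +
           Real.log |Real.sin (b - t) / Real.sin (b + t)|) / 2 := by
      rw [hflip]; ring
    have hsign'' : 0 < (Real.sin (a + t) * Real.sin (b - t)) * (Real.sin (a - t) * Real.sin (b + t)) := by
      have : (Real.sin (a + t) * Real.sin (b - t)) * (Real.sin (a - t) * Real.sin (b + t)) = sA * sB := by
        rw [← hpq, ← huv]; ring
      rw [this]; exact hsign
    have hc := core _ _ _ _ hp hq hv hu hsign''
    rw [harg, hc, hpq, mul_comm (Real.sin (b - t)) (Real.sin (b + t)), huv, hRHS]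
    have hneg : Real.sin (a + t) * Real.sin (b - t) + Real.sin (a - t) * Real.sin (b + t)
        = -(Real.cos (a + b) - Real.cos (t + t) * Real.cos (a - b)) := by
      rw [Real.sin_add, Real.sin_sub, Real.sin_add, Real.sin_sub, Real.cos_sub, Real.cos_add, Real.cos_add]
      linear_combination (Real.sin a * Real.sin b - Real.cos a * Real.cos b) * Real.sin_sq_add_cos_sq t
    rw [hneg, abs_neg]

lemma sinsq_lt {x y : ℝ} (hy : |y| ≤ Real.pi / 2) (h : |x| < |y|) :
    Real.sin x ^ 2 < Real.sin y ^ 2 := by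
  have hx2 : Real.sin x ^ 2 = Real.sin |x| ^ 2 := by
    rcases abs_choice x with h' | h' <;> rw [h'] <;> simp [Real.sin_neg]
  have hy2 : Real.sin y ^ 2 = Real.sin |y| ^ 2 := by
    rcases abs_choice y with h' | h' <;> rw [h'] <;> simp [Real.sin_neg]
  rw [hx2, hy2]
  have h0 : 0 ≤ Real.sin |x| := Real.sin_nonneg_of_nonneg_of_le_pi (abs_nonneg x)
    (by nlinarith [Real.pi_pos])
  have hlt : Real.sin |x| < Real.sin |y| :=
    Real.sin_lt_sin_of_lt_of_le_pi_div_two (by nlinarith [abs_nonneg x, Real.pi_pos]) hy h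
  exact pow_lt_pow_left₀ hlt h0 two_ne_zero

/-- Case (i) of Proposition 3: the local non-unitary amplitudes `cosh((r₊ ± r₋)/2)`. -/
theorem stmt4 (φ₁ φ₂ θ : ℝ)
    (hφ₁ : φ₁ ∈ Set.Icc (-Real.pi) Real.pi)
    (hφ₂ : φ₂ ∈ Set.Icc (-Real.pi) Real.pi)
    (hθ : θ ∈ Set.Icc (-Real.pi) Real.pi)
    (hφ₁0 : φ₁ ≠ 0) (hφ₂0 : φ₂ ≠ 0)
    (hp : |θ| ≠ |(φ₁ + φ₂) / 2|) (hm : |θ| ≠ |(φ₁ - φ₂) / 2|)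
    (hS : Sm φ₁ φ₂ ≠ 0)
    (hcase : |θ| < phil φ₁ φ₂ ∨ phiu φ₁ φ₂ < |θ|) :
    Real.cosh ((rplus φ₁ φ₂ θ + rminus φ₁ φ₂ θ) / 2)
      = |Real.tan (chi φ₁ φ₂ θ / 2) * (Real.cos (φ₂ / 2) - Real.cos θ * Real.cos (φ₁ / 2)) /
          (2 * Sm φ₁ φ₂)| ∧
    Real.cosh ((rplus φ₁ φ₂ θ - rminus φ₁ φ₂ θ) / 2)
      = |Real.tan (chi φ₁ φ₂ θ / 2) * (Real.cos (φ₁ / 2) - Real.cos θ * Real.cos (φ₂ / 2)) /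
          (2 * Sm φ₁ φ₂)| := by
  obtain ⟨hφ₁l, hφ₁r⟩ := hφ₁
  obtain ⟨hφ₂l, hφ₂r⟩ := hφ₂
  obtain ⟨hθl, hθr⟩ := hθ
  have hπ := Real.pi_pos
  have habs2 : ∀ x : ℝ, |x / 2| = |x| / 2 := fun x => by rw [abs_div, abs_two]
  have hA4 : |(φ₁ + φ₂) / 4| = |(φ₁ + φ₂) / 2| / 2 := by
    rw [show (φ₁ + φ₂) / 4 = ((φ₁ + φ₂) / 2) / 2 by ring, habs2]
  have hB4 : |(φ₁ - φ₂) / 4| = |(φ₁ - φ₂) / 2| / 2 := by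
    rw [show (φ₁ - φ₂) / 4 = ((φ₁ - φ₂) / 2) / 2 by ring, habs2]
  have haPi : |(φ₁ + φ₂) / 4| ≤ Real.pi / 2 := by
    rw [abs_le]; constructor <;> [linarith; linarith]
  have hbPi : |(φ₁ - φ₂) / 4| ≤ Real.pi / 2 := by
    rw [abs_le]; constructor <;> [linarith; linarith]
  have htPi : |θ / 2| ≤ Real.pi / 2 := by
    rw [abs_le]; constructor <;> [linarith; linarith]
  have hsign : 0 < (Real.sin ((φ₁ + φ₂) / 4) ^ 2 - Real.sin (θ / 2) ^ 2) *
      (Real.sin ((φ₁ - φ₂) / 4) ^ 2 - Real.sin (θ / 2) ^ 2) := by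
    rcases hcase with hc | hc
    · have h1 : |θ / 2| < |(φ₁ + φ₂) / 4| := by
        rw [habs2, hA4]
        have := lt_of_lt_of_le hc (min_le_left _ _)
        unfold phil at hc
        linarith [lt_of_lt_of_le hc (min_le_left |(φ₁ + φ₂) / 2| |(φ₁ - φ₂) / 2|)]
      have h2 : |θ / 2| < |(φ₁ - φ₂) / 4| := by
        rw [habs2, hB4]
        unfold phil at hc
        linarith [lt_of_lt_of_le hc (min_le_right |(φ₁ + φ₂) / 2| |(φ₁ - φ₂) / 2|)]
      have s1 := sinsq_lt haPi h1
      have s2 := sinsq_lt hbPi h2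
      nlinarith
    · unfold phiu at hc
      have h1 : |(φ₁ + φ₂) / 4| < |θ / 2| := by
        rw [habs2, hA4]
        linarith [lt_of_le_of_lt (le_max_left |(φ₁ + φ₂) / 2| |(φ₁ - φ₂) / 2|) hc]
      have h2 : |(φ₁ - φ₂) / 4| < |θ / 2| := by
        rw [habs2, hB4]
        linarith [lt_of_le_of_lt (le_max_right |(φ₁ + φ₂) / 2| |(φ₁ - φ₂) / 2|) hc]
      have s1 := sinsq_lt htPi h1
      have s2 := sinsq_lt htPi h2
      nlinarith
  have hab : Real.sin ((φ₁ + φ₂) / 4) ^ 2 - Real.sin ((φ₁ - φ₂) / 4) ^ 2 ≠ 0 := by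
    intro h
    exact hS (by unfold Sm; rw [h]; norm_num)
  obtain ⟨H1, H2⟩ := master ((φ₁ + φ₂) / 4) ((φ₁ - φ₂) / 4) (θ / 2) hsign hab
  simp only [rplus, rminus, chi, mplus, mminus, Sm]
  rw [show ((φ₁ + φ₂) / 2 + θ) / 2 = (φ₁ + φ₂) / 4 + θ / 2 by ring,
    show ((φ₁ + φ₂) / 2 - θ) / 2 = (φ₁ + φ₂) / 4 - θ / 2 by ring,
    show ((φ₁ - φ₂) / 2 + θ) / 2 = (φ₁ - φ₂) / 4 + θ / 2 by ring,
    show ((φ₁ - φ₂) / 2 - θ) / 2 = (φ₁ - φ₂) / 4 - θ / 2 by ring,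
    show ∀ x : ℝ, 4 * Real.arctan x / 2 = 2 * Real.arctan x from fun x => by ring,
    show Real.cos (φ₂ / 2) = Real.cos ((φ₁ + φ₂) / 4 - (φ₁ - φ₂) / 4) from by congr 1; ring,
    show Real.cos (φ₁ / 2) = Real.cos ((φ₁ + φ₂) / 4 + (φ₁ - φ₂) / 4) from by congr 1; ring,
    show Real.cos θ = Real.cos (θ / 2 + θ / 2) from by congr 1; ring]
  exact ⟨H1, H2⟩
end

section
/- Let φ₁, φ₂ ∈ [−π, π] with (φ₁, φ₂) ≠ (0, 0). Then φ_u > 0, φ_l < π, and the quantities S₊ + |S₋|/sin(φ_u/2) and S₊ − |S₋|/cos(φ_l/2) both lie in the interval [0, 1]. In particular, there exist angles θ₊, θ₋ ∈ [0, π] with sin(θ₊/2) = √(S₊ + |S₋|/sin(φ_u/2)) and sin(θ₋/2) = √(S₊ − |S₋|/cos(φ_l/2)). -/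
private lemma sinsq_half_abs (x : ℝ) : Real.sin (|x| / 2) ^ 2 = Real.sin (x / 2) ^ 2 := by
  rcases abs_cases x with ⟨h, _⟩ | ⟨h, _⟩ <;> rw [h]
  rw [neg_div, Real.sin_neg]; ring

private lemma sin_half_mono {x y : ℝ} (h0 : 0 ≤ x) (hxy : x ≤ y) (hy : y ≤ Real.pi) :
    Real.sin (x / 2) ≤ Real.sin (y / 2) := by
  have hpi := Real.pi_pos
  apply Real.strictMonoOn_sin.monotoneOn (Set.mem_Icc.mpr ⟨by linarith, by linarith⟩)
    (Set.mem_Icc.mpr ⟨by linarith, by linarith⟩) (by linarith)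

private lemma exists_theta {v : ℝ} (hv : v ∈ Set.Icc (0 : ℝ) 1) :
    ∃ θ ∈ Set.Icc (0 : ℝ) Real.pi, Real.sin (θ / 2) = Real.sqrt v := by
  obtain ⟨hv0, hv1⟩ := hv
  have hs0 : 0 ≤ Real.sqrt v := Real.sqrt_nonneg v
  have hs1 : Real.sqrt v ≤ 1 := Real.sqrt_le_one.mpr hv1
  refine ⟨2 * Real.arcsin (Real.sqrt v), Set.mem_Icc.mpr ⟨?_, ?_⟩, ?_⟩
  · have := Real.arcsin_nonneg.mpr hs0; linarith
  · have := Real.arcsin_le_pi_div_two (Real.sqrt v); linarith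
  · rw [show 2 * Real.arcsin (Real.sqrt v) / 2 = Real.arcsin (Real.sqrt v) by ring]
    exact Real.sin_arcsin (by linarith) hs1

set_option maxHeartbeats 1600000 in
/-- Existence of the additional weighted Pauli-X measurement angles `θ₊` and `θ₋`. -/
theorem stmt15 (φ₁ φ₂ : ℝ)
    (hφ₁ : φ₁ ∈ Set.Icc (-Real.pi) Real.pi)
    (hφ₂ : φ₂ ∈ Set.Icc (-Real.pi) Real.pi)
    (hne : (φ₁, φ₂) ≠ (0, 0)) :
    0 < phiu φ₁ φ₂ ∧ phil φ₁ φ₂ < Real.pi ∧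
    Sp φ₁ φ₂ + |Sm φ₁ φ₂| / Real.sin (phiu φ₁ φ₂ / 2) ∈ Set.Icc (0 : ℝ) 1 ∧
    Sp φ₁ φ₂ - |Sm φ₁ φ₂| / Real.cos (phil φ₁ φ₂ / 2) ∈ Set.Icc (0 : ℝ) 1 ∧
    (∃ θp ∈ Set.Icc (0 : ℝ) Real.pi,
      Real.sin (θp / 2) = Real.sqrt (Sp φ₁ φ₂ + |Sm φ₁ φ₂| / Real.sin (phiu φ₁ φ₂ / 2))) ∧
    (∃ θm ∈ Set.Icc (0 : ℝ) Real.pi,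
      Real.sin (θm / 2) = Real.sqrt (Sp φ₁ φ₂ - |Sm φ₁ φ₂| / Real.cos (phil φ₁ φ₂ / 2))) := by
  obtain ⟨h1l, h1r⟩ := hφ₁
  obtain ⟨h2l, h2r⟩ := hφ₂
  have hpi := Real.pi_pos
  have hsum : |(φ₁ + φ₂) / 2| + |(φ₁ - φ₂) / 2| ≤ Real.pi := by
    rcases abs_cases ((φ₁ + φ₂) / 2) with ⟨e, _⟩ | ⟨e, _⟩ <;>
      rcases abs_cases ((φ₁ - φ₂) / 2) with ⟨e', _⟩ | ⟨e', _⟩ <;> rw [e, e'] <;> linarith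
  have hsum' : phiu φ₁ φ₂ + phil φ₁ φ₂ ≤ Real.pi := by
    rw [phiu, phil, max_add_min]; exact hsum
  have hl0 : 0 ≤ phil φ₁ φ₂ := le_min (abs_nonneg _) (abs_nonneg _)
  have hlu : phil φ₁ φ₂ ≤ phiu φ₁ φ₂ := min_le_max
  have hu_le : phiu φ₁ φ₂ ≤ Real.pi := by linarith
  have hu_pos : 0 < phiu φ₁ φ₂ := by
    rcases lt_or_ge 0 (phiu φ₁ φ₂) with h | h
    · exact h
    · exfalso
      have ea : |(φ₁ + φ₂) / 2| = 0 :=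
        le_antisymm (le_trans (le_max_left _ _) h) (abs_nonneg _)
      have eb : |(φ₁ - φ₂) / 2| = 0 :=
        le_antisymm (le_trans (le_max_right _ _) h) (abs_nonneg _)
      rw [abs_eq_zero] at ea eb
      exact hne (by simp [Prod.ext_iff]; constructor <;> linarith)
  have hl_lt : phil φ₁ φ₂ < Real.pi := by linarith
  set u := phiu φ₁ φ₂ with hu_def
  set l := phil φ₁ φ₂ with hl_def
  set su := Real.sin (u / 2) with hsu_def
  set sl := Real.sin (l / 2) with hsl_def
  set cl := Real.cos (l / 2) with hcl_def
  have hsu_pos : 0 < su := Real.sin_pos_of_pos_of_lt_pi (by linarith) (by linarith)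
  have hsl0 : 0 ≤ sl := Real.sin_nonneg_of_nonneg_of_le_pi (by linarith) (by linarith)
  have hslu : sl ≤ su := sin_half_mono hl0 hlu hu_le
  have hsq : sl ^ 2 ≤ su ^ 2 := pow_le_pow_left₀ hsl0 hslu 2
  have hsu1 : su ≤ 1 := Real.sin_le_one _
  have hcl_pos : 0 < cl := Real.cos_pos_of_mem_Ioo ⟨by linarith, by linarith⟩
  have hcl1 : cl ≤ 1 := Real.cos_le_one _
  have hsucl : su ≤ cl := by
    have h := sin_half_mono (le_of_lt hu_pos) (by linarith : u ≤ Real.pi - l)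
      (by linarith : Real.pi - l ≤ Real.pi)
    rwa [show (Real.pi - l) / 2 = Real.pi / 2 - l / 2 by ring,
      Real.sin_pi_div_two_sub] at h
  have hpyth : sl ^ 2 + cl ^ 2 = 1 := Real.sin_sq_add_cos_sq _
  -- express Sp and |Sm| via su, sl
  have e4p : (φ₁ + φ₂) / 4 = ((φ₁ + φ₂) / 2) / 2 := by ring
  have e4m : (φ₁ - φ₂) / 4 = ((φ₁ - φ₂) / 2) / 2 := by ring
  have hkey : Sp φ₁ φ₂ = (su ^ 2 + sl ^ 2) / 2 ∧ |Sm φ₁ φ₂| = (su ^ 2 - sl ^ 2) / 2 := by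
    rcases le_total |(φ₁ - φ₂) / 2| |(φ₁ + φ₂) / 2| with h | h
    · have hu : u = |(φ₁ + φ₂) / 2| := max_eq_left h
      have hl : l = |(φ₁ - φ₂) / 2| := min_eq_right h
      have e1 : su ^ 2 = Real.sin ((φ₁ + φ₂) / 4) ^ 2 := by
        rw [hsu_def, hu, sinsq_half_abs, e4p]
      have e2 : sl ^ 2 = Real.sin ((φ₁ - φ₂) / 4) ^ 2 := by
        rw [hsl_def, hl, sinsq_half_abs, e4m]
      constructor
      · rw [Sp, e1, e2]
      · rw [Sm, ← e1, ← e2, abs_of_nonneg (by linarith)]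
    · have hu : u = |(φ₁ - φ₂) / 2| := max_eq_right h
      have hl : l = |(φ₁ + φ₂) / 2| := min_eq_left h
      have e1 : su ^ 2 = Real.sin ((φ₁ - φ₂) / 4) ^ 2 := by
        rw [hsu_def, hu, sinsq_half_abs, e4m]
      have e2 : sl ^ 2 = Real.sin ((φ₁ + φ₂) / 4) ^ 2 := by
        rw [hsl_def, hl, sinsq_half_abs, e4p]
      constructor
      · rw [Sp, e1, e2]; ring
      · rw [Sm, ← e1, ← e2, abs_of_nonpos (by linarith)]; ring
  obtain ⟨hSp, hSm⟩ := hkey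
  have G3 : Sp φ₁ φ₂ + |Sm φ₁ φ₂| / su ∈ Set.Icc (0 : ℝ) 1 := by
    rw [hSp, hSm]
    constructor
    · have := div_nonneg (by linarith : (0:ℝ) ≤ (su ^ 2 - sl ^ 2) / 2) hsu_pos.le
      have h1 : 0 ≤ su ^ 2 := sq_nonneg su
      have h2 : 0 ≤ sl ^ 2 := sq_nonneg sl
      linarith
    · have h1 : (su ^ 2 - sl ^ 2) / 2 / su ≤ 1 - (su ^ 2 + sl ^ 2) / 2 := by
        rw [div_le_iff₀ hsu_pos]
        have fact : 0 ≤ (1 - su) * (su ^ 2 + 2 * su + sl ^ 2) :=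
          mul_nonneg (by linarith) (by positivity)
        nlinarith [fact]
      linarith
  have G4 : Sp φ₁ φ₂ - |Sm φ₁ φ₂| / cl ∈ Set.Icc (0 : ℝ) 1 := by
    rw [hSp, hSm]
    constructor
    · have h1 : (su ^ 2 - sl ^ 2) / 2 / cl ≤ (su ^ 2 + sl ^ 2) / 2 := by
        rw [div_le_iff₀ hcl_pos]
        have hsq2 : su ^ 2 ≤ cl ^ 2 := pow_le_pow_left₀ hsu_pos.le hsucl 2
        have fact1 : 0 ≤ (1 - cl) * (cl ^ 2 - su ^ 2) :=
          mul_nonneg (by linarith) (by linarith)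
        have fact2 : 0 ≤ (1 - cl) * (1 + 2 * cl) :=
          mul_nonneg (by linarith) (by linarith)
        have hpc : sl ^ 2 * cl = cl - cl ^ 3 := by linear_combination cl * hpyth
        nlinarith [fact1, fact2, hpc, hpyth]
      linarith
    · have h2 : (0:ℝ) ≤ (su ^ 2 - sl ^ 2) / 2 / cl :=
        div_nonneg (by linarith) hcl_pos.le
      nlinarith
  exact ⟨hu_pos, hl_lt, G3, G4, exists_theta G3, exists_theta G4⟩
end
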